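/- For every nonempty C∞-word w, the following are equivalent: (1) w is fully extendable, i.e., the four words 1w1, 1w2, 2w1 and 2w2 are all C∞-words; (2) w is double-rooted and maximal; (3) w and every nonempty derivative D^j(w) of w have length at least two, begin with two distinct symbols and end with two distinct symbols. -/

import Mathlib

namespace CInfWords

open scoped Classical

/-- Run-length encoding Δ of a word. -/
def rle : List ℕ → List ℕ
  | [] => []
  | [_] => [1]
  | a :: b :: l =>
    if a = b then
      match rle (b :: l) with
      | [] => [1]
      | c :: r => (c + 1) :: r
    else 1 :: rle (b :: l)

/-- Erase a leading `1`, if any. -/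
def trim1 : List ℕ → List ℕ
  | 1 :: l => l
  | l => l

/-- The derivative `D`: the run-length encoding with the first and/or the last
symbol erased when they are equal to `1`. -/
def D (w : List ℕ) : List ℕ := trim1 ((trim1 (rle w).reverse).reverse)

/-- Words over Σ = {1,2}. -/
def IsWord (w : List ℕ) : Prop := ∀ x ∈ w, x = 1 ∨ x = 2

/-- Words over Σ₀ = {0,1,2}. -/
def IsWord0 (w : List ℕ) : Prop := ∀ x ∈ w, x = 0 ∨ x = 1 ∨ x = 2

/-- Σ₀^{++}: words over Σ₀ that are empty or begin with a nonzero symbol. -/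
def Spp (w : List ℕ) : Prop := IsWord0 w ∧ (w = [] ∨ w.headI ≠ 0)

/-- C^∞-words: every iterated derivative is a word over Σ = {1,2}. -/
def Cinf (w : List ℕ) : Prop := ∀ k, IsWord (D^[k] w)

/-- The height of a C^∞-word: the least k with D^[k] w = ε. -/
noncomputable def height (w : List ℕ) : ℕ := sInf {k | D^[k] w = []}

/-- The root of a C^∞-word of height k > 0: its (k-1)-st derivative. -/
noncomputable def root (w : List ℕ) : List ℕ := D^[height w - 1] w

/-- `v` is a primitive of `w`. -/
def Primitive (v w : List ℕ) : Prop := IsWord v ∧ D v = w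

/-- The complement: swap 1's and 2's. -/
def compl (w : List ℕ) : List ℕ := w.map (fun x => 3 - x)

/-- Minimal C^∞-words: every derivative is a shortest primitive of the next one. -/
def Minimal (w : List ℕ) : Prop :=
  Cinf w ∧ 0 < height w ∧
    ∀ j, j + 2 ≤ height w → ∀ v, Primitive v (D^[j+1] w) → (D^[j] w).length ≤ v.length

/-- Maximal C^∞-words: every derivative is a longest primitive of the next one. -/
def Maximal (w : List ℕ) : Prop :=
  Cinf w ∧ 0 < height w ∧
    ∀ j, j + 2 ≤ height w → ∀ v, Primitive v (D^[j+1] w) → v.length ≤ (D^[j] w).length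

def LeftMinimal (w : List ℕ) : Prop := ∃ v, Minimal v ∧ w <+: v
def RightMinimal (w : List ℕ) : Prop := ∃ v, Minimal v ∧ w <:+ v
def LeftMaximal (w : List ℕ) : Prop := ∃ v, Maximal v ∧ w <+: v
def RightMaximal (w : List ℕ) : Prop := ∃ v, Maximal v ∧ w <:+ v

/-- Single-rooted minimal words. -/
def SRMin (w : List ℕ) : Prop := Minimal w ∧ (root w).length = 1

/-- Double-rooted minimal words. -/
def DRMin (w : List ℕ) : Prop := Minimal w ∧ (root w).length = 2

/-- The left frontier Ψ(w). -/
noncomputable def psi (w : List ℕ) : List ℕ :=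
  (List.range (height w)).map fun i =>
    if i = 0 then w.getD 0 0
    else if (D^[i] w).getD 0 0 = 2 ∧ (D^[i-1] w).getD 0 0 ≠ (D^[i-1] w).getD 1 0
      then 0
    else (D^[i] w).getD 0 0

/-- The single-rooted minimal word with left frontier U (if it exists). -/
noncomputable def srmOf (U : List ℕ) : List ℕ :=
  if h : ∃ w, SRMin w ∧ psi w = U then h.choose else []

/-- The double-rooted minimal word with left frontier U (if it exists). -/
noncomputable def drmOf (U : List ℕ) : List ℕ :=
  if h : ∃ w, DRMin w ∧ psi w = U then h.choose else []

/-- Γs: the right frontier of the single-rooted minimal word with left frontier U. -/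
noncomputable def Gs (U : List ℕ) : List ℕ := psi (srmOf U).reverse

/-- Γd: the right frontier of the double-rooted minimal word with left frontier U. -/
noncomputable def Gd (U : List ℕ) : List ℕ := psi (drmOf U).reverse

/-- Θ = Γs ∘ Γd. -/
noncomputable def Th (U : List ℕ) : List ℕ := Gs (Gd U)

/-- Π = Γd ∘ Γs. -/
noncomputable def Pp (U : List ℕ) : List ℕ := Gd (Gs U)

/-- One step in the graph G: from node U, the edge labeled 1 goes to U·1, the edge
labeled 2 goes to U·2, and the edge labeled 0 goes to Θ(U)·2. -/
noncomputable def step (U : List ℕ) (a : ℕ) : List ℕ :=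
  if a = 1 then U ++ [1] else if a = 2 then U ++ [2] else Th U ++ [2]

/-- The endpoint of the path in G starting at the origin ε and labeled by W. -/
noncomputable def pathEnd (W : List ℕ) : List ℕ := W.foldl step []

/-- W ∈ Σ₀^{++} labels a directed path in G from ε to U. -/
def LabelsPath (W U : List ℕ) : Prop := Spp W ∧ pathEnd W = U

/-- ‖U‖: the number of words in Σ₀^{++} labeling a path in G from ε to U. -/
noncomputable def normG (U : List ℕ) : ℕ := {W | LabelsPath W U}.ncard

/-- |U|: the length of the single-rooted minimal word with left frontier U. -/
noncomputable def len (U : List ℕ) : ℕ := (srmOf U).length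

/-- u is the minimal part of w: the first (leftmost-occurring) factor of w that
is a single-rooted minimal word of the same height as w. -/
def IsMinPart (u w : List ℕ) : Prop :=
  ∃ s t, w = s ++ u ++ t ∧ SRMin u ∧ height u = height w ∧
    ∀ u' s' t', w = s' ++ u' ++ t' → SRMin u' → height u' = height w →
      s.length ≤ s'.length

/-!
Since `|v| = ΣΔ(v)` and `D` only erases a leading and a trailing `1` of `Δ(v)`, every word
satisfies `|v| ≤ ΣD(v) + 2`, with equality exactly when `Δ(v) = 1·D(v)·1`, that is, when `v`
begins and ends with two distinct letters. Every word over `{1,2}` has a primitive of length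
`ΣD(v) + 2`, so these are the longest primitives, and (2) ⇔ (3) holds level by level (at the root,
`D(root) = ε` and the condition reads `|root| = 2`).

If `Δ(w) = 1·D(w)·1`, then `D(awb) = a'·D(w)·b'`, where `a' = 2` or `1` according as `a` equals the
first letter of `w` or not, and likewise for `b'`; hence `w` is fully extendable iff `D(w)` is, and
(3) ⇒ (1) follows by induction on the length. Conversely, if `w` is a single letter `x` or begins
with `xx`, then `xwx` begins with a run of length at least 3, which survives in `D(xwx)`; with the
mirror argument at the end of `w`, this gives (1) ⇒ (3).
-/

theorem rle_cons_cons_of_ne {a b : ℕ} (h : a ≠ b) (l : List ℕ) :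
    rle (a :: b :: l) = 1 :: rle (b :: l) := by
  simp [rle, h]

theorem rle_cons_cons_self {a c : ℕ} {l r : List ℕ} (h : rle (a :: l) = c :: r) :
    rle (a :: a :: l) = (c + 1) :: r := by
  simp [rle, h]

theorem exists_rle_cons_eq : ∀ (a : ℕ) (l : List ℕ), ∃ c r, rle (a :: l) = c :: r
  | _, [] => ⟨1, [], rfl⟩
  | a, b :: l => by
    obtain ⟨c, r, h⟩ := exists_rle_cons_eq b l
    by_cases hab : a = b
    · subst hab
      exact ⟨c + 1, r, rle_cons_cons_self h⟩
    · exact ⟨1, _, rle_cons_cons_of_ne hab l⟩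

theorem rle_ne_nil {w : List ℕ} (hw : w ≠ []) : rle w ≠ [] := by
  obtain ⟨a, l, rfl⟩ := List.exists_cons_of_ne_nil hw
  obtain ⟨c, r, h⟩ := exists_rle_cons_eq a l
  simp [h]

theorem sum_rle : ∀ w : List ℕ, (rle w).sum = w.length
  | [] => rfl
  | [_] => rfl
  | a :: b :: l => by
    have ih := sum_rle (b :: l)
    obtain ⟨c, r, h⟩ := exists_rle_cons_eq b l
    rcases eq_or_ne a b with rfl | hab
    · rw [h, List.sum_cons] at ih
      rw [rle_cons_cons_self h, List.sum_cons, List.length_cons, ← ih, add_right_comm]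
    · rw [rle_cons_cons_of_ne hab, List.sum_cons, ih, add_comm]
      rfl

theorem one_le_of_mem_rle : ∀ {w : List ℕ}, ∀ x ∈ rle w, 1 ≤ x
  | [] => by simp [rle]
  | [_] => by simp [rle]
  | a :: b :: l => by
    have ih := one_le_of_mem_rle (w := b :: l)
    obtain ⟨c, r, h⟩ := exists_rle_cons_eq b l
    rcases eq_or_ne a b with rfl | hab
    · rw [h] at ih
      rw [rle_cons_cons_self h]
      intro x hx
      rcases List.mem_cons.1 hx with rfl | hx
      exacts [Nat.le_add_left 1 c, ih x (List.mem_cons_of_mem c hx)]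
    · rw [rle_cons_cons_of_ne hab]
      intro x hx
      rcases List.mem_cons.1 hx with rfl | hx
      exacts [le_rfl, ih x hx]

theorem rle_append {u v : List ℕ} (h : u.getLast? ≠ v.head?) :
    rle (u ++ v) = rle u ++ rle v := by
  induction u with
  | nil => rfl
  | cons x u ih =>
    rcases u with _ | ⟨y, u⟩
    · rcases v with _ | ⟨y, v⟩
      · rfl
      · simp_all [rle_cons_cons_of_ne, rle]
    · have ih := ih (by simpa using h)
      simp only [List.cons_append] at ih ⊢
      rcases eq_or_ne x y with rfl | hxy
      · obtain ⟨c, r, hcr⟩ := exists_rle_cons_eq x u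
        rw [hcr, List.cons_append] at ih
        rw [rle_cons_cons_self ih, rle_cons_cons_self hcr, List.cons_append]
      · rw [rle_cons_cons_of_ne hxy, rle_cons_cons_of_ne hxy, ih, List.cons_append]

theorem rle_replicate (n a : ℕ) : rle (List.replicate (n + 1) a) = [n + 1] := by
  induction n with
  | zero => rfl
  | succ n ih =>
    rw [List.replicate_succ] at ih ⊢
    exact rle_cons_cons_self ih
theorem exists_eq_replicate_append {w : List ℕ} (hw : w ≠ []) :
    ∃ n t, w = List.replicate (n + 1) w.headI ++ t ∧ t.head? ≠ some w.headI := by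
  obtain ⟨x, l, rfl⟩ := List.exists_cons_of_ne_nil hw
  refine ⟨(l.takeWhile (· = x)).length, l.dropWhile (· = x), ?_, ?_⟩
  · have : l.takeWhile (· = x) = List.replicate _ x :=
      List.eq_replicate_iff.2 ⟨rfl, fun b hb => by simpa using List.mem_takeWhile_imp hb⟩
    simp [List.replicate_succ, ← this]
  · intro h
    have hne : l.dropWhile (· = x) ≠ [] := by rintro h'; simp [h'] at h
    have := List.head_dropWhile_not (· = x) hne
    rw [List.head?_eq_some_head hne] at h
    simp_all

theorem rle_reverse (w : List ℕ) : rle w.reverse = (rle w).reverse := by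
  induction h : w.length using Nat.strong_induction_on generalizing w with
  | _ n ih =>
    rcases eq_or_ne w [] with rfl | hw
    · rfl
    obtain ⟨k, t, hwt, ht⟩ := exists_eq_replicate_append hw
    have hlt : t.length < n := by rw [← h, hwt]; simp
    rw [hwt, List.reverse_append, List.reverse_replicate,
      rle_append (u := t.reverse) (by simpa [List.head?_replicate, eq_comm] using ht),
      rle_append (by simpa [List.getLast?_replicate] using ht.symm),
      rle_replicate,
      ih _ hlt t rfl]
    simp


@[simp] theorem trim1_nil : trim1 [] = [] := rfl

@[simp] theorem trim1_one_cons (l : List ℕ) : trim1 (1 :: l) = l := rfl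

@[simp] theorem trim1_cons_of_ne {a : ℕ} (h : a ≠ 1) (l : List ℕ) : trim1 (a :: l) = a :: l := by
  unfold trim1; split <;> simp_all

theorem length_trim1_le (l : List ℕ) : (trim1 l).length ≤ l.length := by
  unfold trim1; split <;> simp

theorem sum_le_sum_trim1_add_one (l : List ℕ) : l.sum ≤ (trim1 l).sum + 1 := by
  unfold trim1; split <;> simp [add_comm]

theorem eq_one_cons_trim1_of_sum_eq {l : List ℕ} (h : l.sum = (trim1 l).sum + 1) :
    l = 1 :: trim1 l := by
  unfold trim1 at *; split at h <;> simp_all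

theorem length_trim1_lt_sum {l : List ℕ} (hl : l ≠ []) (hpos : ∀ x ∈ l, 1 ≤ x) :
    (trim1 l).length < l.sum := by
  obtain ⟨c, t, rfl⟩ := List.exists_cons_of_ne_nil hl
  have ht := List.length_le_sum_of_one_le t fun x hx => hpos x (List.mem_cons_of_mem c hx)
  by_cases hc : c = 1
  · subst hc
    rw [trim1_one_cons, List.sum_cons]
    omega
  · have := hpos c List.mem_cons_self
    rw [trim1_cons_of_ne hc, List.sum_cons, List.length_cons]
    omega

theorem D_eq_of_rle_eq {v s : List ℕ} (h : rle v = 1 :: (s ++ [1])) : D v = s := by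
  simp [D, h]

theorem length_le_sum_D_add_two (v : List ℕ) : v.length ≤ (D v).sum + 2 := by
  have h1 := sum_le_sum_trim1_add_one (rle v).reverse
  have h2 := sum_le_sum_trim1_add_one (trim1 (rle v).reverse).reverse
  simp only [List.sum_reverse, sum_rle] at h1 h2
  rw [D]
  omega

theorem rle_eq_of_length_eq {v : List ℕ} (h : v.length = (D v).sum + 2) :
    rle v = 1 :: (D v ++ [1]) := by
  have h1 := sum_le_sum_trim1_add_one (rle v).reverse
  have h2 := sum_le_sum_trim1_add_one (trim1 (rle v).reverse).reverse
  simp only [List.sum_reverse, sum_rle] at h1 h2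
  rw [D] at h
  have e1 := eq_one_cons_trim1_of_sum_eq (l := (rle v).reverse)
    (by rw [List.sum_reverse, sum_rle]; omega)
  have e2 := eq_one_cons_trim1_of_sum_eq (l := (trim1 (rle v).reverse).reverse)
    (by rw [List.sum_reverse]; omega)
  rw [← List.reverse_reverse (rle v), e1, List.reverse_cons, ← List.reverse_reverse (trim1 _), e2]
  simp [D]

theorem length_eq_sum_D_add_two_iff {v : List ℕ} :
    v.length = (D v).sum + 2 ↔ rle v = 1 :: (D v ++ [1]) := by
  refine ⟨rle_eq_of_length_eq, fun h => ?_⟩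
  rw [← sum_rle, h, List.sum_cons, List.sum_append, List.sum_singleton]
  omega

theorem length_D_lt {w : List ℕ} (hw : w ≠ []) : (D w).length < w.length := by
  have hpos : ∀ x ∈ (rle w).reverse, 1 ≤ x := fun x hx =>
    one_le_of_mem_rle x (List.mem_reverse.1 hx)
  calc (D w).length ≤ (trim1 (rle w).reverse).length := by
        simpa [D] using length_trim1_le (trim1 (rle w).reverse).reverse
    _ < ((rle w).reverse).sum := length_trim1_lt_sum (by simpa using rle_ne_nil hw) hpos
    _ = w.length := by rw [List.sum_reverse, sum_rle]

theorem trim1_reverse_trim1_comm (l : List ℕ) :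
    trim1 (trim1 l).reverse = (trim1 (trim1 l.reverse).reverse).reverse := by
  rcases l with _ | ⟨c, s⟩
  · rfl
  rcases List.eq_nil_or_concat s with rfl | ⟨s, d, rfl⟩
  · by_cases hc : c = 1 <;> simp [hc]
  · by_cases hc : c = 1 <;> by_cases hd : d = 1 <;> simp [hc, hd]

theorem D_reverse (w : List ℕ) : D w.reverse = (D w).reverse := by
  simp only [D, rle_reverse, List.reverse_reverse]
  exact trim1_reverse_trim1_comm (rle w)

theorem iterate_D_nil (k : ℕ) : D^[k] [] = [] :=
  Function.iterate_fixed rfl k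

theorem iterate_D_reverse (k : ℕ) (w : List ℕ) : D^[k] w.reverse = (D^[k] w).reverse :=
  Function.Commute.iterate_left D_reverse k w

theorem cinf_iff {w : List ℕ} : Cinf w ↔ IsWord w ∧ Cinf (D w) :=
  ⟨fun h => ⟨h 0, fun k => h (k + 1)⟩, fun h k => k.casesOn h.1 fun k => h.2 k⟩

theorem cinf_nil : Cinf [] := fun k => by simp [iterate_D_nil, IsWord]

theorem Cinf.reverse {w : List ℕ} (h : Cinf w) : Cinf w.reverse := fun k x hx => by
  rw [iterate_D_reverse, List.mem_reverse] at hx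
  exact h k x hx

theorem exists_iterate_D_eq_nil (w : List ℕ) : ∃ k, D^[k] w = [] := by
  rcases eq_or_ne w [] with rfl | hw
  · exact ⟨0, rfl⟩
  · obtain ⟨k, hk⟩ := exists_iterate_D_eq_nil (D w)
    exact ⟨k + 1, hk⟩
termination_by w.length
decreasing_by exact length_D_lt hw

theorem iterate_D_ne_nil_iff {w : List ℕ} {k : ℕ} : D^[k] w ≠ [] ↔ k < height w := by
  refine ⟨fun hk => ?_, fun hk => Nat.notMem_of_lt_sInf hk⟩
  by_contra! hle
  obtain ⟨m, rfl⟩ := Nat.exists_eq_add_of_le hle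
  have hnil : D^[height w] w = [] := Nat.sInf_mem (exists_iterate_D_eq_nil w)
  rw [add_comm, Function.iterate_add_apply, hnil] at hk
  exact hk (iterate_D_nil m)

theorem exists_isWord_rle_eq (l : List ℕ) (hl : ∀ n ∈ l, 1 ≤ n) {x : ℕ} (hx : x = 1 ∨ x = 2) :
    ∃ v, IsWord v ∧ (∀ y ∈ v.head?, y = x) ∧ rle v = l := by
  induction l generalizing x with
  | nil => exact ⟨[], by simp [IsWord], by simp, rfl⟩
  | cons c l ih =>
    obtain ⟨v, hv, hvx, hvl⟩ := ih (fun n hn => hl n (by simp [hn])) (x := 3 - x) (by omega)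
    obtain ⟨n, rfl⟩ : ∃ n, c = n + 1 := ⟨c - 1, by have := hl c (by simp); omega⟩
    refine ⟨List.replicate (n + 1) x ++ v, fun y hy => ?_, ?_, ?_⟩
    · rcases List.mem_append.1 hy with hy | hy
      · rwa [List.eq_of_mem_replicate hy]
      · exact hv y hy
    · rw [List.replicate_succ, List.cons_append, List.head?_cons]
      simp
    · rw [rle_append, rle_replicate, hvl]
      · rfl
      · intro h
        have := hvx x (by simp [← h, List.getLast?_replicate])
        omega

theorem exists_primitive_length_eq {u : List ℕ} (hu : IsWord u) :
    ∃ v, Primitive v u ∧ v.length = u.sum + 2 := by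
  obtain ⟨v, hv, -, hvu⟩ := exists_isWord_rle_eq (1 :: (u ++ [1]))
    (by intro n hn; simp only [List.mem_cons, List.mem_append] at hn; grind [IsWord]) (x := 1)
    (by simp)
  refine ⟨v, ⟨hv, D_eq_of_rle_eq hvu⟩, ?_⟩
  rw [← sum_rle, hvu, List.sum_cons, List.sum_append, List.sum_singleton]
  omega

theorem forall_primitive_length_le_iff {v : List ℕ} (hv : IsWord (D v)) :
    (∀ v', Primitive v' (D v) → v'.length ≤ v.length) ↔ v.length = (D v).sum + 2 := by
  refine ⟨fun h => ?_, fun h v' hv' => ?_⟩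
  · obtain ⟨v', hv', hlen⟩ := exists_primitive_length_eq hv
    have := h v' hv'
    have := length_le_sum_D_add_two v
    omega
  · have := length_le_sum_D_add_two v'
    rw [hv'.2] at this
    omega

theorem root_length_eq_two_and_maximal_iff {w : List ℕ} (hw : Cinf w) (hne : w ≠ []) :
    (root w).length = 2 ∧ Maximal w ↔
      ∀ j < height w, (D^[j] w).length = (D (D^[j] w)).sum + 2 := by
  have h0 : 0 < height w := (iterate_D_ne_nil_iff (k := 0)).1 hne
  have hroot : D (root w) = [] := by
    by_contra h
    rw [root, ← Function.iterate_succ_apply' D, Nat.succ_eq_add_one, Nat.sub_add_cancel h0] at h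
    exact lt_irrefl _ (iterate_D_ne_nil_iff.1 h)
  have hmax : Maximal w ↔ ∀ j, j + 2 ≤ height w → (D^[j] w).length = (D (D^[j] w)).sum + 2 := by
    simp only [Maximal, hw, h0, true_and, Function.iterate_succ_apply']
    refine forall₂_congr fun j _ => forall_primitive_length_le_iff ?_
    simpa only [Function.iterate_succ_apply'] using hw (j + 1)
  rw [hmax]
  constructor
  · rintro ⟨hlen, hlevels⟩ j hj
    by_cases hj2 : j + 2 ≤ height w
    · exact hlevels j hj2
    · obtain rfl : j = height w - 1 := by omega
      rw [← root, hroot, hlen]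
      rfl
  · intro h
    refine ⟨?_, fun j hj => h j (by omega)⟩
    have := h (height w - 1) (by omega)
    rwa [← root, hroot] at this

def StartsDistinct (u : List ℕ) : Prop := ∃ x y l, x ≠ y ∧ u = x :: y :: l

def HasDistinctEnds (u : List ℕ) : Prop :=
  2 ≤ u.length ∧ u.getD 0 0 ≠ u.getD 1 0 ∧ u.getD (u.length - 1) 0 ≠ u.getD (u.length - 2) 0

theorem startsDistinct_iff_getD {u : List ℕ} :
    StartsDistinct u ↔ 2 ≤ u.length ∧ u.getD 0 0 ≠ u.getD 1 0 := by
  rcases u with _ | ⟨x, _ | ⟨y, l⟩⟩ <;> simp [StartsDistinct]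

theorem hasDistinctEnds_iff {u : List ℕ} :
    HasDistinctEnds u ↔ StartsDistinct u ∧ StartsDistinct u.reverse := by
  rw [startsDistinct_iff_getD, startsDistinct_iff_getD, HasDistinctEnds, List.length_reverse]
  constructor
  · rintro ⟨hlen, hfirst, hlast⟩
    rw [List.getD_reverse 0 (by omega), List.getD_reverse 1 (by omega)]
    exact ⟨⟨hlen, hfirst⟩, hlen, hlast⟩
  · rintro ⟨⟨hlen, hfirst⟩, -, hlast⟩
    rw [List.getD_reverse 0 (by omega), List.getD_reverse 1 (by omega)] at hlast
    exact ⟨hlen, hfirst, hlast⟩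

theorem startsDistinct_iff_rle {u : List ℕ} : StartsDistinct u ↔ ∃ t ≠ [], rle u = 1 :: t := by
  constructor
  · rintro ⟨x, y, l, hxy, rfl⟩
    exact ⟨_, rle_ne_nil (List.cons_ne_nil y l), rle_cons_cons_of_ne hxy l⟩
  · rintro ⟨t, ht, hu⟩
    rcases u with _ | ⟨x, _ | ⟨y, l⟩⟩
    · cases hu
    · cases hu; exact absurd rfl ht
    · refine ⟨x, y, l, fun hxy => ?_, rfl⟩
      subst hxy
      obtain ⟨c, r, hcr⟩ := exists_rle_cons_eq x l
      have := one_le_of_mem_rle c (by rw [hcr]; exact List.mem_cons_self)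
      rw [rle_cons_cons_self hcr, List.cons.injEq] at hu
      omega

theorem rle_eq_iff_startsDistinct {u : List ℕ} :
    rle u = 1 :: (D u ++ [1]) ↔ StartsDistinct u ∧ StartsDistinct u.reverse := by
  simp only [startsDistinct_iff_rle, rle_reverse]
  constructor
  · intro h
    rw [h]
    exact ⟨⟨_, by simp, rfl⟩, ⟨(D u).reverse ++ [1], by simp, by simp⟩⟩
  · rintro ⟨⟨t, ht, hu⟩, ⟨t', -, hu'⟩⟩
    have hlast : t.getLast ht = 1 := by
      have := congrArg List.head? hu'
      rw [List.head?_reverse, hu, List.getLast?_cons, List.getLast?_eq_some_getLast ht] at this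
      simpa using this
    rw [← List.dropLast_append_getLast ht, hlast] at hu
    rw [hu, D_eq_of_rle_eq hu]

theorem rle_eq_iff_hasDistinctEnds {u : List ℕ} :
    rle u = 1 :: (D u ++ [1]) ↔ HasDistinctEnds u := by
  rw [rle_eq_iff_startsDistinct, hasDistinctEnds_iff]

theorem rle_cons_of_rle_eq {w t : List ℕ} {x : ℕ} (hx : w.head? = some x)
    (h : rle w = 1 :: t) (a : ℕ) : rle (a :: w) = rle [a, x] ++ t := by
  obtain ⟨l, rfl⟩ : ∃ l, w = x :: l := by
    rcases w with _ | ⟨y, l⟩ <;> simp_all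
  by_cases hax : a = x <;> simp [rle, h, hax]

theorem rle_append_singleton_of_rle_eq {w t : List ℕ} {z : ℕ} (hz : w.getLast? = some z)
    (h : rle w = t ++ [1]) (b : ℕ) : rle (w ++ [b]) = t ++ rle [z, b] := by
  have hrev : rle w.reverse = 1 :: t.reverse := by simp [rle_reverse, h]
  have := rle_cons_of_rle_eq (by simpa using hz) hrev b
  rw [← List.reverse_reverse (w ++ [b]), rle_reverse, List.reverse_append, List.reverse_singleton,
    List.singleton_append, this, List.reverse_append, List.reverse_reverse, ← rle_reverse]
  rfl

theorem D_cons_append {w : List ℕ} {x z : ℕ} (hx : w.head? = some x) (hz : w.getLast? = some z)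
    (h : rle w = 1 :: (D w ++ [1])) (a b : ℕ) :
    D (a :: (w ++ [b])) = (if a = x then 2 else 1) :: (D w ++ [if b = z then 2 else 1]) := by
  have hwb := rle_append_singleton_of_rle_eq hz (t := 1 :: D w) h b
  have hawb := rle_cons_of_rle_eq (by rw [List.head?_append, hx]; rfl) hwb a
  rw [D, hawb]
  by_cases hax : a = x <;> by_cases hbz : b = z <;> simp [rle, hax, hbz, eq_comm (a := z)]

def FullyExtendable (w : List ℕ) : Prop :=
  ∀ a b, (a = 1 ∨ a = 2) → (b = 1 ∨ b = 2) → Cinf (a :: (w ++ [b]))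

theorem fullyExtendable_iff {w : List ℕ} :
    FullyExtendable w ↔ Cinf (1 :: (w ++ [1])) ∧ Cinf (1 :: (w ++ [2])) ∧
      Cinf (2 :: (w ++ [1])) ∧ Cinf (2 :: (w ++ [2])) := by
  refine ⟨fun h => ?_, ?_⟩
  · exact ⟨h _ _ (.inl rfl) (.inl rfl), h _ _ (.inl rfl) (.inr rfl), h _ _ (.inr rfl) (.inl rfl),
      h _ _ (.inr rfl) (.inr rfl)⟩
  · rintro ⟨h11, h12, h21, h22⟩ a b (rfl | rfl) (rfl | rfl) <;> assumption

theorem fullyExtendable_nil : FullyExtendable [] := by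
  intro a b ha hb
  rw [List.nil_append]
  have hword : IsWord [a, b] := by simp [IsWord, ha, hb]
  refine cinf_iff.2 ⟨hword, ?_⟩
  by_cases hab : a = b
  · have hD : D [a, b] = [2] := by simp [D, rle, hab]
    rw [hD]
    exact cinf_iff.2 ⟨by simp [IsWord], cinf_nil⟩
  · have hD : D [a, b] = [] := by simp [D, rle, hab]
    rw [hD]
    exact cinf_nil

theorem FullyExtendable.reverse {w : List ℕ} (h : FullyExtendable w) :
    FullyExtendable w.reverse := fun a b ha hb => by
  simpa using (h b a hb ha).reverse

theorem FullyExtendable.isWord {w : List ℕ} (h : FullyExtendable w) : IsWord w :=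
  fun x hx => (h 1 1 (by simp) (by simp)) 0 x (by simp [hx])

theorem exists_symbol_ite_eq {x a' : ℕ} (hx : x = 1 ∨ x = 2) (ha' : a' = 1 ∨ a' = 2) :
    ∃ a, (a = 1 ∨ a = 2) ∧ (if a = x then 2 else 1) = a' :=
  ⟨if a' = 2 then x else 3 - x, by split_ifs <;> omega, by split_ifs <;> omega⟩

theorem fullyExtendable_iff_of_rle_eq {w : List ℕ} (h : rle w = 1 :: (D w ++ [1])) :
    FullyExtendable w ↔ IsWord w ∧ FullyExtendable (D w) := by
  have hne : w ≠ [] := by rintro rfl; cases h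
  have hext := D_cons_append (List.head?_eq_some_head hne) (List.getLast?_eq_some_getLast hne) h
  constructor
  · intro hw
    refine ⟨hw.isWord, fun a' b' ha' hb' => ?_⟩
    have hx' := hw.isWord _ (List.head_mem hne)
    have hz' := hw.isWord _ (List.getLast_mem hne)
    obtain ⟨a, ha, rfl⟩ := exists_symbol_ite_eq hx' ha'
    obtain ⟨b, hb, rfl⟩ := exists_symbol_ite_eq hz' hb'
    exact hext a b ▸ (cinf_iff.1 (hw a b ha hb)).2
  · rintro ⟨hw, hDw⟩ a b ha hb
    refine cinf_iff.2 ⟨?_, hext a b ▸ hDw _ _ (by split_ifs <;> simp) (by split_ifs <;> simp)⟩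
    intro c hc
    simp only [List.mem_cons, List.mem_append, List.not_mem_nil, or_false] at hc
    rcases hc with rfl | hc | rfl
    exacts [ha, hw c hc, hb]

theorem mem_D_of_rle_eq_cons {v t : List ℕ} {c : ℕ} (h : rle v = c :: t) (hc : c ≠ 1) :
    c ∈ D v := by
  rw [D, h]
  rcases List.eq_nil_or_concat t with rfl | ⟨s, d, rfl⟩
  · simp [hc]
  · by_cases hd : d = 1 <;> simp [hc, hd]

theorem not_cinf_cons_cons_cons (x : ℕ) (l : List ℕ) : ¬ Cinf (x :: x :: x :: l) := by
  intro h
  obtain ⟨c, r, hcr⟩ := exists_rle_cons_eq x l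
  have hc := one_le_of_mem_rle c (by rw [hcr]; exact List.mem_cons_self)
  have hrle := rle_cons_cons_self (rle_cons_cons_self hcr)
  have := h 1 _ (mem_D_of_rle_eq_cons hrle (by omega))
  omega

theorem FullyExtendable.startsDistinct {w : List ℕ} (h : FullyExtendable w) (hne : w ≠ []) :
    StartsDistinct w := by
  obtain ⟨x, t, rfl⟩ := List.exists_cons_of_ne_nil hne
  have hx := h.isWord x List.mem_cons_self
  have hxwx := h x x hx hx
  rcases t with _ | ⟨y, l⟩
  · exact absurd hxwx (not_cinf_cons_cons_cons x [])
  · refine ⟨x, y, l, fun hxy => ?_, rfl⟩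
    subst hxy
    exact not_cinf_cons_cons_cons x _ hxwx

theorem FullyExtendable.rle_eq {w : List ℕ} (h : FullyExtendable w) (hne : w ≠ []) :
    rle w = 1 :: (D w ++ [1]) :=
  rle_eq_iff_startsDistinct.2
    ⟨h.startsDistinct hne, h.reverse.startsDistinct (List.reverse_ne_nil_iff.2 hne)⟩

theorem fullyExtendable_iff_forall_rle_eq {w : List ℕ} (hw : Cinf w) :
    FullyExtendable w ↔ ∀ j, D^[j] w ≠ [] → rle (D^[j] w) = 1 :: (D (D^[j] w) ++ [1]) := by
  rcases eq_or_ne w [] with rfl | hne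
  · simp [fullyExtendable_nil, iterate_D_nil]
  have ih := fullyExtendable_iff_forall_rle_eq (cinf_iff.1 hw).2
  have hsplit : (∀ j, D^[j] w ≠ [] → rle (D^[j] w) = 1 :: (D (D^[j] w) ++ [1])) ↔
      rle w = 1 :: (D w ++ [1]) ∧
        ∀ j, D^[j] (D w) ≠ [] → rle (D^[j] (D w)) = 1 :: (D (D^[j] (D w)) ++ [1]) :=
    ⟨fun h => ⟨h 0 hne, fun j => h (j + 1)⟩, fun h j => j.casesOn (fun _ => h.1) h.2⟩
  rw [hsplit]
  constructor
  · intro hfe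
    have hrle := hfe.rle_eq hne
    exact ⟨hrle, ih.1 ((fullyExtendable_iff_of_rle_eq hrle).1 hfe).2⟩
  · rintro ⟨hrle, hD⟩
    exact (fullyExtendable_iff_of_rle_eq hrle).2 ⟨(cinf_iff.1 hw).1, ih.2 hD⟩
termination_by w.length
decreasing_by exact length_D_lt hne

/-- for a nonempty C∞-word, full extendability, being double-rooted
maximal, and all nonempty derivatives beginning and ending with two distinct
symbols, are equivalent. -/
theorem fully_extendable_tfae (w : List ℕ) (hw : Cinf w) (hne : w ≠ []) :
    List.TFAE
      [ Cinf (1 :: (w ++ [1])) ∧ Cinf (1 :: (w ++ [2])) ∧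
          Cinf (2 :: (w ++ [1])) ∧ Cinf (2 :: (w ++ [2])),
        (root w).length = 2 ∧ Maximal w,
        ∀ j, D^[j] w ≠ [] →
          2 ≤ (D^[j] w).length ∧
          (D^[j] w).getD 0 0 ≠ (D^[j] w).getD 1 0 ∧
          (D^[j] w).getD ((D^[j] w).length - 1) 0 ≠ (D^[j] w).getD ((D^[j] w).length - 2) 0 ] := by
  have h13 : FullyExtendable w ↔ ∀ j, D^[j] w ≠ [] → HasDistinctEnds (D^[j] w) := by
    simp only [fullyExtendable_iff_forall_rle_eq hw, rle_eq_iff_hasDistinctEnds]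
  have h23 : (root w).length = 2 ∧ Maximal w ↔
      ∀ j, D^[j] w ≠ [] → HasDistinctEnds (D^[j] w) := by
    simp only [root_length_eq_two_and_maximal_iff hw hne, length_eq_sum_D_add_two_iff,
      rle_eq_iff_hasDistinctEnds, iterate_D_ne_nil_iff]
  tfae_have 1 ↔ 3 := fullyExtendable_iff.symm.trans h13
  tfae_have 2 ↔ 3 := h23
  tfae_finish

end CInfWords
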